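/- Let G be a d-regular graph on n vertices, and let 𝐌 be a random matching of G such that every edge e ∈ E(G) satisfies P[e ∈ 𝐌] ≥ 1/(8d). Let M¹ be the matching matrix with balancing parameter β = 1 of 𝐌. Then for every x ∈ ℝⁿ: Φ(x) − E[Φ(M¹·x)] ≥ (1/(16d))·Φ_G(x). -/

import Mathlib

open MeasureTheory ProbabilityTheory Real
open scoped ENNReal BigOperators

/-- The quadratic node potential `Φ(x) = Σᵢ (xᵢ - x̄)²`. -/
noncomputable def nodePotential {n : ℕ} (x : Fin n → ℝ) : ℝ :=
  ∑ i, (x i - (∑ j, x j) / n) ^ 2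

/-- The quadratic edge potential `Φ_G(x) = Σ_{{i,j} ∈ E(G)} (xᵢ - xⱼ)²`
(each unordered edge counted once). -/
noncomputable def edgePotential {n : ℕ} (G : SimpleGraph (Fin n)) [DecidableRel G.Adj]
    (x : Fin n → ℝ) : ℝ :=
  (1 / 2) * ∑ i, ∑ j, (if G.Adj i j then (x i - x j) ^ 2 else 0)

/-- The matching matrix with balancing parameter `β` of the matching encoded by the
involution `f` (node `i` is matched to `f i` when `f i ≠ i`, and unmatched otherwise). -/
noncomputable def matchingMatrix {n : ℕ} (β : ℝ) (f : Fin n → Fin n) :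
    Matrix (Fin n) (Fin n) ℝ :=
  Matrix.of fun i j =>
    if i = j then (if f i = i then 1 else 1 - β / 2)
    else if f i = j then β / 2 else 0

lemma mulVec_matchingMatrix {n : ℕ} (f : Fin n → Fin n) (x : Fin n → ℝ) :
    (matchingMatrix 1 f).mulVec x = fun i => (x i + x (f i)) / 2 := by
  funext i
  simp only [Matrix.mulVec, dotProduct, matchingMatrix, Matrix.of_apply]
  have h : ∀ j, (if i = j then (if f i = i then (1:ℝ) else 1 - 1 / 2)
      else if f i = j then 1 / 2 else 0) * x j
      = (if i = j then (1/2) * x j else 0) + (if f i = j then (1/2) * x j else 0) := by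
    intro j
    by_cases h1 : i = j
    · subst h1
      by_cases h2 : f i = i
      · rw [if_pos rfl, if_pos h2, if_pos rfl, if_pos h2]; ring
      · rw [if_pos rfl, if_neg h2, if_pos rfl, if_neg h2]; ring
    · by_cases h2 : f i = j
      · rw [if_neg h1, if_pos h2, if_neg h1, if_pos h2]; ring
      · rw [if_neg h1, if_neg h2, if_neg h1, if_neg h2]; ring
  rw [Finset.sum_congr rfl (fun j _ => h j), Finset.sum_add_distrib]
  rw [Finset.sum_ite_eq, Finset.sum_ite_eq]
  simp
  ring

lemma nodePotential_mulVec {n : ℕ} (f : Fin n → Fin n) (hf : Function.Involutive f)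
    (x : Fin n → ℝ) :
    nodePotential ((matchingMatrix 1 f).mulVec x)
      = nodePotential x - (1/4) * ∑ i, (x i - x (f i)) ^ 2 := by
  rw [mulVec_matchingMatrix]
  have hbij := hf.bijective
  have hsum : ∑ i, x (f i) = ∑ i, x i :=
    Fintype.sum_bijective f hbij _ _ (fun i => rfl)
  unfold nodePotential
  have hsumy : (∑ j, (x j + x (f j)) / 2) = ∑ j, x j := by
    rw [← Finset.sum_div, Finset.sum_add_distrib, hsum]; ring
  rw [hsumy]
  set m := (∑ j, x j) / (n : ℝ) with hm
  have h2 : ∑ i, (x (f i) - m) ^ 2 = ∑ i, (x i - m) ^ 2 :=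
    Fintype.sum_bijective f hbij _ _ (fun i => rfl)
  have key : ∀ i, ((x i + x (f i)) / 2 - m) ^ 2
      = (x i - m) ^ 2 - (1/4) * (x i - x (f i)) ^ 2
        - ((x i - m) ^ 2 - (x (f i) - m) ^ 2) / 2 := fun i => by ring
  rw [Finset.sum_congr rfl (fun i _ => key i)]
  rw [Finset.sum_sub_distrib, Finset.sum_sub_distrib, ← Finset.sum_div,
    Finset.sum_sub_distrib, h2, ← Finset.mul_sum]
  ring

/-- Let `G` be `d`-regular on `n` vertices and let `𝐌` be a random
matching of `G` (encoded by the random involution `F`) such that every edge `{i,j}` of `G`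
is in the matching with probability at least `1/(8d)`. With `M¹` the matching matrix of `𝐌`
with balancing parameter `β = 1`, for every `x ∈ ℝⁿ`:
`Φ(x) − E[Φ(M¹·x)] ≥ (1/(16d))·Φ_G(x)`. -/
theorem stmt10 {Ω : Type*} [MeasureSpace Ω] [IsProbabilityMeasure (ℙ : Measure Ω)]
    (n d : ℕ) (hn : 0 < n) (hd : 0 < d)
    (G : SimpleGraph (Fin n)) [DecidableRel G.Adj] (hreg : G.IsRegularOfDegree d)
    (F : Ω → Fin n → Fin n)
    (hFmeas : Measurable F)
    (hFinv : ∀ ω i, F ω (F ω i) = i)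
    (hFedge : ∀ ω i, F ω i ≠ i → G.Adj i (F ω i))
    (hprob : ∀ i j : Fin n, G.Adj i j →
      ENNReal.ofReal (1 / (8 * (d : ℝ))) ≤ ℙ {ω | F ω i = j}) :
    ∀ x : Fin n → ℝ,
      (1 / (16 * (d : ℝ))) * edgePotential G x ≤
        nodePotential x - ∫ ω, nodePotential ((matchingMatrix 1 (F ω)).mulVec x) := by
  intro x
  -- notation
  set s : Fin n → Fin n → Set Ω := fun i j => {ω | F ω i = j} with hs_def
  have hs : ∀ i j, MeasurableSet (s i j) := by
    intro i j
    exact ((measurable_pi_apply i).comp hFmeas) (measurableSet_singleton j)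
  set g : Ω → ℝ := fun ω => ∑ i, ∑ j, (s i j).indicator (fun _ => (x i - x j) ^ 2) ω
    with hg_def
  have hgint : Integrable g := by
    apply integrable_finset_sum
    intro i _
    apply integrable_finset_sum
    intro j _
    exact (integrable_const _).indicator (hs i j)
  -- pointwise identity
  have hpt : ∀ ω, nodePotential ((matchingMatrix 1 (F ω)).mulVec x)
      = nodePotential x - (1/4) * g ω := by
    intro ω
    rw [nodePotential_mulVec (F ω) (hFinv ω) x]
    congr 1
    congr 1
    apply Finset.sum_congr rfl
    intro i _
    have : ∑ j, (s i j).indicator (fun _ => (x i - x j) ^ 2) ω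
        = ∑ j, (if F ω i = j then (x i - x j) ^ 2 else 0) := by
      apply Finset.sum_congr rfl
      intro j _
      simp [Set.indicator_apply, hs_def, Set.mem_setOf_eq]
    rw [this, Finset.sum_ite_eq]
    simp
  -- integral computation
  have hint : ∫ ω, nodePotential ((matchingMatrix 1 (F ω)).mulVec x)
      = nodePotential x - (1/4) * ∫ ω, g ω := by
    rw [show (fun ω => nodePotential ((matchingMatrix 1 (F ω)).mulVec x))
        = fun ω => nodePotential x - (1/4) * g ω from funext hpt]
    rw [integral_sub (integrable_const _) (hgint.const_mul _), integral_const,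
      integral_const_mul]
    simp
  have hintg : ∫ ω, g ω = ∑ i, ∑ j, (ℙ (s i j)).toReal * (x i - x j) ^ 2 := by
    rw [hg_def]
    rw [integral_finset_sum _ (fun i _ => integrable_finset_sum _
      (fun j _ => (integrable_const _).indicator (hs i j)))]
    apply Finset.sum_congr rfl
    intro i _
    rw [integral_finset_sum _ (fun j _ => (integrable_const _).indicator (hs i j))]
    apply Finset.sum_congr rfl
    intro j _
    rw [integral_indicator_const _ (hs i j)]
    simp [mul_comm, Measure.real]
  rw [hint]
  have hd0 : (d:ℝ) ≠ 0 := Nat.cast_ne_zero.mpr hd.ne'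
  have hred : nodePotential x - (nodePotential x - (1/4) * ∫ ω, g ω)
      = (1/4) * ∫ ω, g ω := by ring
  rw [hred, hintg]
  have lhs_eq : (1/(16*(d:ℝ))) * edgePotential G x
      = ∑ i, ∑ j, (if G.Adj i j then (1/(32*(d:ℝ))) * (x i - x j) ^ 2 else 0) := by
    rw [edgePotential, ← mul_assoc, Finset.mul_sum]
    refine Finset.sum_congr rfl fun i _ => ?_
    rw [Finset.mul_sum]
    refine Finset.sum_congr rfl fun j _ => ?_
    by_cases hA : G.Adj i j
    · rw [if_pos hA, if_pos hA, div_mul_div_comm]; ring_nf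
    · rw [if_neg hA, if_neg hA, mul_zero]
  rw [lhs_eq]
  have rhs_eq : (1/4 : ℝ) * ∑ i, ∑ j, (ℙ (s i j)).toReal * (x i - x j) ^ 2
      = ∑ i, ∑ j, (1/4 : ℝ) * ((ℙ (s i j)).toReal * (x i - x j) ^ 2) := by
    rw [Finset.mul_sum]
    exact Finset.sum_congr rfl fun i _ => Finset.mul_sum _ _ _
  rw [rhs_eq]
  apply Finset.sum_le_sum
  intro i _
  apply Finset.sum_le_sum
  intro j _
  by_cases hA : G.Adj i j
  · rw [if_pos hA]
    have hp : 1/(8*(d:ℝ)) ≤ (ℙ (s i j)).toReal :=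
      (ENNReal.ofReal_le_iff_le_toReal (measure_ne_top ℙ _)).mp (hprob i j hA)
    have hc : (0:ℝ) ≤ (x i - x j) ^ 2 := sq_nonneg _
    have h1 : (1/(8*(d:ℝ))) * (x i - x j) ^ 2 ≤ (ℙ (s i j)).toReal * (x i - x j) ^ 2 :=
      mul_le_mul_of_nonneg_right hp hc
    have e : (1/(32*(d:ℝ))) = (1/4) * (1/(8*(d:ℝ))) := by
      rw [div_mul_div_comm]; ring_nf
    rw [e, mul_assoc]
    exact mul_le_mul_of_nonneg_left h1 (by norm_num)
  · rw [if_neg hA]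
    positivity
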